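/- arXiv:1608.05759 — 2 statements merged into one kernel-verified Lean document; each statement's English description precedes it below -/
import Mathlib

section
/- Let (G, L) be a pair that is a coloring harmonica (either a coloring harmonica from an edge uv to a vertex w, or a coloring harmonica from a vertex u to a vertex w). Then G has no L-coloring. -/
/-!
Common definitions: plane graphs (given by a concrete embedding in the plane),
outer face, canvases, list colorings, governments, harmonicas and coloring
harmonicas, following Postle–Thomas,
"Five-list-coloring graphs on surfaces III".
-/

open Set

universe u

/-- A finite simple graph together with an embedding in the plane:
each vertex gets a point, each edge a simple arc joining its endpoints;
arcs avoid other vertices, and two distinct edges meet only in common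
endpoints. -/
structure PlaneGraph (V : Type u) where
  verts : Set V
  Adj : V → V → Prop
  finite_verts : verts.Finite
  adj_symm : ∀ u v, Adj u v → Adj v u
  adj_irrefl : ∀ v, ¬Adj v v
  adj_mem : ∀ u v, Adj u v → u ∈ verts
  pos : V → ℝ × ℝ
  arc : Sym2 V → Set (ℝ × ℝ)
  pos_injOn : Set.InjOn pos verts
  arc_arc : ∀ u v, Adj u v → ∃ f : ℝ → ℝ × ℝ,
    ContinuousOn f (Set.Icc 0 1) ∧ Set.InjOn f (Set.Icc 0 1) ∧
    f '' Set.Icc 0 1 = arc s(u, v) ∧ f 0 = pos u ∧ f 1 = pos v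
  arc_avoid : ∀ u v, Adj u v → ∀ w ∈ verts, pos w ∈ arc s(u, v) → w = u ∨ w = v
  arc_meet : ∀ u v x y, Adj u v → Adj x y → s(u, v) ≠ s(x, y) →
    arc s(u, v) ∩ arc s(x, y) ⊆ pos '' (({u, v} : Set V) ∩ ({x, y} : Set V))

namespace PlaneGraph

variable {V : Type u}

/-- The point set of the drawing of the plane graph. -/
def image (G : PlaneGraph V) : Set (ℝ × ℝ) :=
  G.pos '' G.verts ∪ ⋃ (u : V) (v : V) (_ : G.Adj u v), G.arc s(u, v)

/-- The outer (unbounded) face of the drawing. -/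
def outerFace (G : PlaneGraph V) : Set (ℝ × ℝ) :=
  {p | p ∉ G.image ∧ ¬Bornology.IsBounded (connectedComponentIn G.imageᶜ p)}

/-- A vertex incident with (i.e. on the boundary of) the outer face. -/
def OnOuter (G : PlaneGraph V) (v : V) : Prop := G.pos v ∈ frontier G.outerFace

/-- An edge incident with (i.e. on the boundary of) the outer face. -/
def EdgeOnOuter (G : PlaneGraph V) (u v : V) : Prop :=
  G.arc s(u, v) ⊆ frontier G.outerFace

/-- The vertices of the boundary of the outer face. -/
def boundaryVerts (G : PlaneGraph V) : Set V := {v | v ∈ G.verts ∧ G.OnOuter v}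

/-- Connectivity of a plane graph. -/
def Connected (G : PlaneGraph V) : Prop :=
  G.verts.Nonempty ∧ ∀ u ∈ G.verts, ∀ v ∈ G.verts, Relation.ReflTransGen G.Adj u v

/-- `H` is a (plane) subgraph of `G`, drawn the same way. -/
def IsSubgraph (H G : PlaneGraph V) : Prop :=
  H.verts ⊆ G.verts ∧ (∀ u v, H.Adj u v → G.Adj u v) ∧
  (∀ v ∈ H.verts, H.pos v = G.pos v) ∧
  (∀ u v, H.Adj u v → H.arc s(u, v) = G.arc s(u, v))

/-- Delete a set of vertices (and all incident edges) from a plane graph. -/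
def deleteVerts (G : PlaneGraph V) (s : Set V) : PlaneGraph V where
  verts := G.verts \ s
  Adj u v := G.Adj u v ∧ u ∉ s ∧ v ∉ s
  finite_verts := G.finite_verts.subset Set.diff_subset
  adj_symm := fun u v h => ⟨G.adj_symm u v h.1, h.2.2, h.2.1⟩
  adj_irrefl := fun v h => G.adj_irrefl v h.1
  adj_mem := fun u v h => ⟨G.adj_mem u v h.1, h.2.1⟩
  pos := G.pos
  arc := G.arc
  pos_injOn := G.pos_injOn.mono Set.diff_subset
  arc_arc := fun u v h => G.arc_arc u v h.1
  arc_avoid := fun u v h w hw hm => G.arc_avoid u v h.1 w hw.1 hm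
  arc_meet := fun u v x y h h' hne => G.arc_meet u v x y h.1 h'.1 hne

/-- `G` has a proper coloring from the lists `L`. -/
def HasLColoring (G : PlaneGraph V) (L : V → Finset ℕ) : Prop :=
  ∃ φ : V → ℕ, (∀ v ∈ G.verts, φ v ∈ L v) ∧ ∀ u v, G.Adj u v → φ u ≠ φ v

/-- A vertex of degree exactly one. -/
def DegreeOne (G : PlaneGraph V) (x : V) : Prop :=
  (∃ a, G.Adj x a) ∧ ∀ a b, G.Adj x a → G.Adj x b → a = b

end PlaneGraph

/-- The cyclic successor of an index in a list. -/
def cycNext {V : Type u} (C : List V) (i : Fin C.length) : Fin C.length :=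
  ⟨((i : ℕ) + 1) % C.length, Nat.mod_lt _ (lt_of_le_of_lt (Nat.zero_le _) i.isLt)⟩

/-- The list `C` is a cycle of `G` whose image is exactly the boundary of the
outer face of `G`; i.e. `G` is a plane graph with outer cycle `C`. -/
def PlaneGraph.IsOuterCycle {V : Type u} (G : PlaneGraph V) (C : List V) : Prop :=
  C.Nodup ∧ 3 ≤ C.length ∧ (∀ v ∈ C, v ∈ G.verts) ∧
  (∀ i : Fin C.length, G.Adj (C.get i) (C.get (cycNext C i))) ∧
  frontier G.outerFace =
    G.pos '' {v | v ∈ C} ∪ ⋃ i : Fin C.length, G.arc s(C.get i, C.get (cycNext C i))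

/-- `pq` is an edge of the cycle (given as a list) `C`. -/
def IsCycleEdge {V : Type u} (C : List V) (p q : V) : Prop :=
  ∃ i : Fin C.length, s(p, q) = s(C.get i, C.get (cycNext C i))

/-- `(G, S, L)` is a canvas, where the subgraph `S` of the boundary of the
outer face of `G` is given by its vertex set `Sverts` and adjacency `SAdj`. -/
structure IsCanvas {V : Type u} (G : PlaneGraph V) (Sverts : Set V) (SAdj : V → V → Prop)
    (L : V → Finset ℕ) : Prop where
  sadj_symm : ∀ u v, SAdj u v → SAdj v u
  sadj_sub : ∀ u v, SAdj u v → G.Adj u v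
  sadj_mem : ∀ u v, SAdj u v → u ∈ Sverts
  sverts_sub : Sverts ⊆ G.verts
  sverts_outer : ∀ v ∈ Sverts, G.OnOuter v
  sedges_outer : ∀ u v, SAdj u v → G.EdgeOnOuter u v
  lists_nonempty : ∀ v ∈ G.verts, (L v).Nonempty
  card_inner : ∀ v ∈ G.verts, ¬G.OnOuter v → 5 ≤ (L v).card
  card_outside_S : ∀ v ∈ G.verts, v ∉ Sverts → 3 ≤ (L v).card
  scolorable : ∃ φ : V → ℕ, (∀ v ∈ Sverts, φ v ∈ L v) ∧ ∀ u v, SAdj u v → φ u ≠ φ v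

/-- The adjacency relation of the single-edge path `p₁p₂`. -/
def pathAdj {V : Type u} (p1 p2 : V) : V → V → Prop :=
  fun u v => (u = p1 ∧ v = p2) ∨ (u = p2 ∧ v = p1)

/-- `(G, P, L)` is a canvas whose precolored subgraph is a path `P = p₁p₂` of
length one (in the boundary of the outer face of `G`). -/
def IsPathCanvas {V : Type u} (G : PlaneGraph V) (p1 p2 : V) (L : V → Finset ℕ) : Prop :=
  p1 ≠ p2 ∧ IsCanvas G {p1, p2} (pathAdj p1 p2) L

/-- `c = (c₁, c₂)` is a proper `L`-coloring of the edge `p₁p₂`. -/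
def ProperEdgeColoring {V : Type u} (L : V → Finset ℕ) (p1 p2 : V) (c : ℕ × ℕ) : Prop :=
  c.1 ∈ L p1 ∧ c.2 ∈ L p2 ∧ c.1 ≠ c.2

/-- `Φ_T(P', 𝒞)`: the colorings of the edge `q₁q₂` extendable to an `L`-coloring
of `G` whose restriction to `p₁p₂` lies in `C`. -/
def Phi {V : Type u} (G : PlaneGraph V) (L : V → Finset ℕ) (p1 p2 q1 q2 : V)
    (C : Set (ℕ × ℕ)) : Set (ℕ × ℕ) :=
  {c | ∃ φ : V → ℕ, (∀ v ∈ G.verts, φ v ∈ L v) ∧ (∀ u v, G.Adj u v → φ u ≠ φ v) ∧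
    (φ p1, φ p2) ∈ C ∧ φ q1 = c.1 ∧ φ q2 = c.2}

/-- The set of colors used on the first vertex of the path. -/
def fstColors (C : Set (ℕ × ℕ)) : Set ℕ := Prod.fst '' C

/-- The set of colors used on the second vertex of the path. -/
def sndColors (C : Set (ℕ × ℕ)) : Set ℕ := Prod.snd '' C

/-- A dictatorship: at least two (distinct) colorings, all agreeing on one of
the two vertices (the dictator). -/
def IsDictatorship (C : Set (ℕ × ℕ)) : Prop :=
  (∃ c ∈ C, ∃ d ∈ C, c ≠ d) ∧
  ((∃ a, ∀ c ∈ C, c.1 = a) ∨ (∃ a, ∀ c ∈ C, c.2 = a))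

/-- A democracy: exactly the two colorings `(x, y)` and `(y, x)`. -/
def IsDemocracy (C : Set (ℕ × ℕ)) : Prop :=
  ∃ x y : ℕ, x ≠ y ∧ C = {(x, y), (y, x)}

/-- A government is a dictatorship or a democracy. -/
def IsGovernment (C : Set (ℕ × ℕ)) : Prop := IsDictatorship C ∨ IsDemocracy C

/-- A confederacy: not a government, but the union of two governments. -/
def IsConfederacy (C : Set (ℕ × ℕ)) : Prop :=
  ¬IsGovernment C ∧ ∃ C1 C2 : Set (ℕ × ℕ), IsGovernment C1 ∧ IsGovernment C2 ∧ C = C1 ∪ C2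

/-- The canvas `(G, p₁p₂, L)` is a harmonica from the path `p₁p₂` to the path
`q₁q₂` with government `C`. -/
inductive IsHarmonica {V : Type u} (L : V → Finset ℕ) :
    PlaneGraph V → V → V → V → V → Set (ℕ × ℕ) → Prop where
  /-- Rule (i): `G = P = P'`. -/
  | same (G : PlaneGraph V) (p1 p2 q1 q2 : V) (C : Set (ℕ × ℕ))
      (hcanvas : IsPathCanvas G p1 p2 L)
      (hproper : ∀ c ∈ C, ProperEdgeColoring L p1 p2 c)
      (hgov : IsGovernment C)
      (hq : (q1 = p1 ∧ q2 = p2) ∨ (q1 = p2 ∧ q2 = p1))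
      (hverts : G.verts = {p1, p2})
      (hedges : ∀ u v, G.Adj u v → pathAdj p1 p2 u v) :
      IsHarmonica L G p1 p2 q1 q2 C
  /-- Rule (ii): `C` is a dictatorship, `G = P ∪ P'`, `V(P) ∩ V(P') = {z}`
  where `z` is the dictator. -/
  | cherry (G : PlaneGraph V) (p1 p2 q1 q2 z : V) (C : Set (ℕ × ℕ))
      (hcanvas : IsPathCanvas G p1 p2 L)
      (hproper : ∀ c ∈ C, ProperEdgeColoring L p1 p2 c)
      (hdict : IsDictatorship C)
      (hq : q1 ≠ q2) (hqadj : G.Adj q1 q2) (hqout : G.EdgeOnOuter q1 q2)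
      (hverts : G.verts = {p1, p2, q1, q2})
      (hedges : ∀ u v, G.Adj u v → pathAdj p1 p2 u v ∨ pathAdj q1 q2 u v)
      (hz : (({p1, p2} : Set V) ∩ ({q1, q2} : Set V)) = {z})
      (hzdict : (z = p1 ∧ ∃ a, ∀ c ∈ C, c.1 = a) ∨ (z = p2 ∧ ∃ a, ∀ c ∈ C, c.2 = a)) :
      IsHarmonica L G p1 p2 q1 q2 C
  /-- Rule (iii): `C` is a dictatorship with dictator `z ∈ V(P)` in color `c`,
  sitting on a triangle `z u₁ u₂`. -/
  | dict (G : PlaneGraph V) (p1 p2 q1 q2 z w u1 u2 : V) (c : ℕ) (L0 : Finset ℕ)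
      (C C' : Set (ℕ × ℕ))
      (hcanvas : IsPathCanvas G p1 p2 L)
      (hproper : ∀ d ∈ C, ProperEdgeColoring L p1 p2 d)
      (hdict : IsDictatorship C)
      (hq : q1 ≠ q2) (hqadj : G.Adj q1 q2) (hqout : G.EdgeOnOuter q1 q2)
      (hz : (z = p1 ∧ w = p2 ∧ (∀ d ∈ C, d.1 = c) ∧
              (u1 = w → sndColors C = (L0 : Set ℕ)) ∧
              (u2 = w → sndColors C = (L0 : Set ℕ))) ∨
            (z = p2 ∧ w = p1 ∧ (∀ d ∈ C, d.2 = c) ∧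
              (u1 = w → fstColors C = (L0 : Set ℕ)) ∧
              (u2 = w → fstColors C = (L0 : Set ℕ))))
      (hzu1 : G.Adj z u1) (hzu2 : G.Adj z u2) (hu12 : G.Adj u1 u2)
      (hL0 : L0.card = 2)
      (hLu1 : u1 ∉ ({p1, p2} : Set V) → L u1 = L0 ∪ {c})
      (hLu2 : u2 ∉ ({p1, p2} : Set V) → L u2 = L0 ∪ {c})
      (hu1P : u1 ∈ ({p1, p2} : Set V) → u1 = w)
      (hu2P : u2 ∈ ({p1, p2} : Set V) → u2 = w)
      (hdem : IsDemocracy C')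
      (hC'1 : fstColors C' = (L0 : Set ℕ)) (hC'2 : sndColors C' = (L0 : Set ℕ))
      (hrec : IsHarmonica L (G.deleteVerts (({p1, p2} : Set V) \ {u1, u2})) u1 u2 q1 q2 C') :
      IsHarmonica L G p1 p2 q1 q2 C
  /-- Rule (iv), with `i = 1`: `C` is a democracy, `z` is a common neighbor of
  `p₁, p₂`, and `p₁` is deleted. -/
  | demo1 (G : PlaneGraph V) (p1 p2 q1 q2 z : V) (a b c : ℕ) (L0 : Finset ℕ)
      (C C' : Set (ℕ × ℕ))
      (hcanvas : IsPathCanvas G p1 p2 L)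
      (hproper : ∀ d ∈ C, ProperEdgeColoring L p1 p2 d)
      (hdemC : IsDemocracy C)
      (hq : q1 ≠ q2) (hqadj : G.Adj q1 q2) (hqout : G.EdgeOnOuter q1 q2)
      (hz1 : G.Adj z p1) (hz2 : G.Adj z p2)
      (hLz : L z = L0 ∪ {c})
      (hC1 : fstColors C = (L0 : Set ℕ)) (hC2 : sndColors C = (L0 : Set ℕ))
      (hab : a ≠ b) (hL0ab : (L0 : Set ℕ) = {a, b})
      (hC' : C' = {(c, a), (c, b)})
      (hrec : IsHarmonica L (G.deleteVerts {p1}) z p2 q1 q2 C') :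
      IsHarmonica L G p1 p2 q1 q2 C
  /-- Rule (iv), with `i = 2`: `C` is a democracy, `z` is a common neighbor of
  `p₁, p₂`, and `p₂` is deleted. -/
  | demo2 (G : PlaneGraph V) (p1 p2 q1 q2 z : V) (a b c : ℕ) (L0 : Finset ℕ)
      (C C' : Set (ℕ × ℕ))
      (hcanvas : IsPathCanvas G p1 p2 L)
      (hproper : ∀ d ∈ C, ProperEdgeColoring L p1 p2 d)
      (hdemC : IsDemocracy C)
      (hq : q1 ≠ q2) (hqadj : G.Adj q1 q2) (hqout : G.EdgeOnOuter q1 q2)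
      (hz1 : G.Adj z p1) (hz2 : G.Adj z p2)
      (hLz : L z = L0 ∪ {c})
      (hC1 : fstColors C = (L0 : Set ℕ)) (hC2 : sndColors C = (L0 : Set ℕ))
      (hab : a ≠ b) (hL0ab : (L0 : Set ℕ) = {a, b})
      (hC' : C' = {(c, a), (c, b)})
      (hrec : IsHarmonica L (G.deleteVerts {p2}) z p1 q1 q2 C') :
      IsHarmonica L G p1 p2 q1 q2 C

/-- `(G, L)` is a coloring harmonica from `uv` to `w` (source `Sum.inr (u, v)`)
or from `u` to `w` (source `Sum.inl u`). -/
inductive IsColoringHarmonica {V : Type u} [DecidableEq V] :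
    PlaneGraph V → (V → Finset ℕ) → V ⊕ V × V → V → Prop where
  /-- `G` is a triangle with vertex set `{u, v, w}`, `L(u) = L(v) = L(w)` and
  `|L(u)| = 2`. -/
  | tri (G : PlaneGraph V) (L : V → Finset ℕ) (u v w : V)
      (hconn : G.Connected) (huv : u ≠ v) (huw : u ≠ w) (hvw : v ≠ w)
      (hu : G.OnOuter u) (hv : G.OnOuter v) (hw : G.OnOuter w)
      (huvout : G.EdgeOnOuter u v)
      (hverts : G.verts = {u, v, w})
      (hadjuv : G.Adj u v) (hadjvw : G.Adj v w) (hadjuw : G.Adj u w)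
      (hLuv : L u = L v) (hLvw : L v = L w) (hcard : (L u).card = 2) :
      IsColoringHarmonica G L (Sum.inr (u, v)) w
  /-- There is a triangle `uvz` on the outer face; delete one or both of
  `u, v` and recurse from `z`. -/
  | step (G : PlaneGraph V) (L : V → Finset ℕ) (u v w z : V) (s : Set V)
      (hconn : G.Connected) (huv : u ≠ v) (huw : u ≠ w) (hvw : v ≠ w)
      (hu : G.OnOuter u) (hv : G.OnOuter v) (hw : G.OnOuter w)
      (huvout : G.EdgeOnOuter u v)
      (hadjuv : G.Adj u v) (hadjuz : G.Adj u z) (hadjvz : G.Adj v z)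
      (hz : G.OnOuter z)
      (hLuv : L u = L v) (hsub : L u ⊆ L z)
      (hcardu : (L u).card = 2) (hcardz : (L z).card = 3)
      (hs : s = {u} ∨ s = {v} ∨ s = ({u, v} : Set V))
      (hrec : IsColoringHarmonica (G.deleteVerts s)
        (Function.update L z (L z \ L u)) (Sum.inl z) w) :
      IsColoringHarmonica G L (Sum.inr (u, v)) w
  /-- `|L(u)| = 1`, `u` sits on a triangle `uxy`; delete `u` and recurse
  from `xy`. -/
  | vert (G : PlaneGraph V) (L : V → Finset ℕ) (u w x y : V)
      (hconn : G.Connected) (huw : u ≠ w)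
      (hu : G.OnOuter u) (hw : G.OnOuter w)
      (hx : G.OnOuter x) (hy : G.OnOuter y)
      (hadjux : G.Adj u x) (hadjuy : G.Adj u y) (hadjxy : G.Adj x y)
      (hcardu : (L u).card = 1)
      (hLxy : L x \ L u = L y \ L u) (hcardx : (L x \ L u).card = 2)
      (hrec : IsColoringHarmonica (G.deleteVerts {u})
        (Function.update (Function.update L x (L x \ L u)) y (L y \ L u))
        (Sum.inr (x, y)) w) :
      IsColoringHarmonica G L (Sum.inl u) w

/-- `(G, L)` contains a coloring harmonica `(H, L')` with the given source and
target: `H` is a subgraph of `G` and `L'` agrees with `L` on `V(H)`. -/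
def ContainsColoringHarmonica {V : Type u} [DecidableEq V] (G : PlaneGraph V)
    (L : V → Finset ℕ) (st : V ⊕ V × V) (w : V) : Prop :=
  ∃ (H : PlaneGraph V) (L' : V → Finset ℕ), H.IsSubgraph G ∧
    (∀ x ∈ H.verts, L' x = L x) ∧ IsColoringHarmonica H L' st w

/-- `v` is a cutvertex of the boundary of the outer face of `G`. -/
def BoundaryCutvertex {V : Type u} (G : PlaneGraph V) (v : V) : Prop :=
  ∃ a b : V, a ∈ G.boundaryVerts ∧ b ∈ G.boundaryVerts ∧ a ≠ v ∧ b ≠ v ∧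
    Relation.ReflTransGen (fun x y => G.Adj x y ∧ G.EdgeOnOuter x y) a b ∧
    ¬Relation.ReflTransGen
      (fun x y => G.Adj x y ∧ G.EdgeOnOuter x y ∧ x ≠ v ∧ y ≠ v) a b

open Classical in
/-- The list assignment of the democratic reduction `T(P, L0, x)`:
remove the colors of `L0` from the list of `x` and from the lists of all
neighbors of `P` other than `y`. -/
noncomputable def reducedL {V : Type u} (G : PlaneGraph V) (L : V → Finset ℕ)
    (L0 : Finset ℕ) (Q : List V) (x y : V) : V → Finset ℕ := fun w =>
  if w = x ∨ (w ≠ y ∧ ∃ p ∈ Q, G.Adj w p) then L w \ L0 else L w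

/-- The vertex set of the precolored subgraph of the democratic reduction:
`S ∖ V(P)`, together with `x` as an isolated vertex if its new list is
smaller than 3. -/
def reducedSverts {V : Type u} (Sverts : Set V) (Q : List V) (x : V)
    (L' : V → Finset ℕ) : Set V :=
  {v | (v ∈ Sverts ∧ v ∉ Q) ∨ (v = x ∧ (L' x).card < 3)}

/-- The adjacency of the precolored subgraph of the democratic reduction:
`S ∖ V(P)`. -/
def reducedSAdj {V : Type u} (SAdj : V → V → Prop) (Q : List V) : V → V → Prop :=
  fun u v => SAdj u v ∧ u ∉ Q ∧ v ∉ Q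


theorem coloring_harmonica_not_colorable_aux {V : Type u} [DecidableEq V]
    (G : PlaneGraph V) (L : V → Finset ℕ) (st : V ⊕ V × V) (w : V)
    (h : IsColoringHarmonica G L st w) :
    ¬G.HasLColoring L := by
  induction h with
  | tri G L u v w' hconn huv huw hvw hu hv hw' huvout hverts hadjuv hadjvw hadjuw hLuv hLvw
      hcard =>
    rintro ⟨φ, hmem, hproper⟩
    have hum : u ∈ G.verts := G.adj_mem u v hadjuv
    have hvm : v ∈ G.verts := G.adj_mem v u (G.adj_symm u v hadjuv)
    have hwm : w' ∈ G.verts := G.adj_mem w' u (G.adj_symm u w' hadjuw)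
    have h1 : φ u ∈ L u := hmem u hum
    have h2 : φ v ∈ L u := by rw [hLuv]; exact hmem v hvm
    have h3 : φ w' ∈ L u := by rw [hLuv, hLvw]; exact hmem w' hwm
    have d12 := hproper u v hadjuv
    have d13 := hproper u w' hadjuw
    have d23 := hproper v w' hadjvw
    have hsub : ({φ u, φ v, φ w'} : Finset ℕ) ⊆ L u := by
      intro a ha
      simp only [Finset.mem_insert, Finset.mem_singleton] at ha
      rcases ha with h | h | h <;> subst h <;> assumption
    have hcard3 : ({φ u, φ v, φ w'} : Finset ℕ).card = 3 := by
      rw [Finset.card_insert_of_notMem (by simp [d12, d13]),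
        Finset.card_insert_of_notMem (by simp [d23]), Finset.card_singleton]
    have := Finset.card_le_card hsub
    omega
  | step G L u v w' z s hconn huv huw hvw hu hv hw huvout hadjuv hadjuz hadjvz hz hLuv hsub
      hcardu hcardz hs hrec ih =>
    rintro ⟨φ, hmem, hproper⟩
    apply ih
    refine ⟨φ, ?_, fun a b hab => hproper a b hab.1⟩
    intro t ht
    have htG : t ∈ G.verts := ht.1
    by_cases htz : t = z
    · subst htz
      rw [Function.update_self]
      have hum : u ∈ G.verts := G.adj_mem u v hadjuv
      have hvm : v ∈ G.verts := G.adj_mem v u (G.adj_symm u v hadjuv)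
      have hφu : φ u ∈ L u := hmem u hum
      have hφv : φ v ∈ L u := by rw [hLuv]; exact hmem v hvm
      have hLu : L u = {φ u, φ v} := by
        refine (Finset.eq_of_subset_of_card_le ?_ ?_).symm
        · intro a ha
          simp only [Finset.mem_insert, Finset.mem_singleton] at ha
          rcases ha with h | h <;> subst h <;> assumption
        · have h2c : ({φ u, φ v} : Finset ℕ).card = 2 := by
            rw [Finset.card_insert_of_notMem (by simp [hproper u v hadjuv]),
              Finset.card_singleton]
          rw [hcardu, h2c]
      rw [Finset.mem_sdiff]
      refine ⟨hmem t htG, ?_⟩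
      rw [hLu]
      simp only [Finset.mem_insert, Finset.mem_singleton]
      push_neg
      exact ⟨fun h => (hproper u t hadjuz) h.symm, fun h => (hproper v t hadjvz) h.symm⟩
    · rw [Function.update_of_ne htz]
      exact hmem t htG
  | vert G L u w' x y hconn huw hu hw hx hy hadjux hadjuy hadjxy hcardu hLxy hcardx hrec ih =>
    rintro ⟨φ, hmem, hproper⟩
    apply ih
    refine ⟨φ, ?_, fun a b hab => hproper a b hab.1⟩
    intro t ht
    have htG : t ∈ G.verts := ht.1
    have hum : u ∈ G.verts := G.adj_mem u x hadjux
    have hφu : φ u ∈ L u := hmem u hum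
    have hLu : L u = {φ u} := by
      obtain ⟨a, ha⟩ := Finset.card_eq_one.mp hcardu
      rw [ha] at hφu ⊢
      simp only [Finset.mem_singleton] at hφu
      rw [hφu]
    have hxy : x ≠ y := fun h => G.adj_irrefl x (h ▸ hadjxy)
    by_cases hty : t = y
    · subst hty
      rw [Function.update_self, Finset.mem_sdiff, hLu]
      exact ⟨hmem t htG, by
        simp only [Finset.mem_singleton]
        exact fun h => (hproper u t hadjuy) h.symm⟩
    · rw [Function.update_of_ne hty]
      by_cases htx : t = x
      · subst htx
        rw [Function.update_self, Finset.mem_sdiff, hLu]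
        exact ⟨hmem t htG, by
          simp only [Finset.mem_singleton]
          exact fun h => (hproper u t hadjux) h.symm⟩
      · rw [Function.update_of_ne htx]
        exact hmem t htG

/-- if `(G, L)` is a coloring harmonica (either from an edge `uv`
to a vertex `w`, or from a vertex `u` to a vertex `w`), then `G` has no
`L`-coloring. -/
theorem coloring_harmonica_not_colorable {V : Type u} [DecidableEq V]
    (G : PlaneGraph V) (L : V → Finset ℕ) (st : V ⊕ V × V) (w : V)
    (hnonempty : ∀ v ∈ G.verts, (L v).Nonempty)
    (h : IsColoringHarmonica G L st w) :
    ¬G.HasLColoring L := by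
  exact coloring_harmonica_not_colorable_aux G L st w h
end

section
/- Let T = (G, P, L) be a canvas where P is a path of length one contained in the boundary C of the outer face of G, let 𝒞 be a non-empty collection of proper L-colorings of P, and let P' be an edge of G with both ends in C. If U = u1u2 is a chord of C separating P from P', then Φ_T(P', Φ_T(U, 𝒞)) = Φ_T(P', 𝒞). -/
/-!
Common definitions: plane graphs (given by a concrete embedding in the plane),
outer face, canvases, list colorings, governments, harmonicas and coloring
harmonicas, following Postle–Thomas,
"Five-list-coloring graphs on surfaces III".
-/

open Set

universe u

/-- Proposition 3.3: let `T = (G, P, L)` be a canvas where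
`P = p₁p₂` is a path of length one in the boundary `C` of the outer face of
`G`, let `𝒞` be a non-empty collection of proper `L`-colorings of `P`, and let
`P' = q₁q₂` be an edge of `G` with both ends in `C`. If `U = u₁u₂` is a chord
of `C` separating `P` from `P'`, then `Φ(P', Φ(U, 𝒞)) = Φ(P', 𝒞)`. -/
theorem phi_chord {V : Type u} (G : PlaneGraph V) (p1 p2 q1 q2 u1 u2 : V)
    (L : V → Finset ℕ) (C : Set (ℕ × ℕ))
    (hT : IsPathCanvas G p1 p2 L)
    (hq : G.Adj q1 q2) (hq1 : G.OnOuter q1) (hq2 : G.OnOuter q2)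
    (hCne : C.Nonempty)
    (hCproper : ∀ c ∈ C, ProperEdgeColoring L p1 p2 c)
    -- `U = u₁u₂` is a chord of the boundary of the outer face:
    (hu : G.Adj u1 u2) (hu1 : G.OnOuter u1) (hu2 : G.OnOuter u2)
    (huchord : ¬G.EdgeOnOuter u1 u2)
    -- the chord separates `P` from `P'`: every path in `G` from `P` to `P'`
    -- meets `{u₁, u₂}`:
    (hsep : ∀ a b : V, (a = p1 ∨ a = p2) → (b = q1 ∨ b = q2) →
      a ∉ ({u1, u2} : Set V) → b ∉ ({u1, u2} : Set V) →
      ¬Relation.ReflTransGen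
        (fun x y => G.Adj x y ∧ x ∉ ({u1, u2} : Set V) ∧ y ∉ ({u1, u2} : Set V)) a b) :
    Phi G L u1 u2 q1 q2 (Phi G L p1 p2 u1 u2 C) = Phi G L p1 p2 q1 q2 C := by
  classical
  ext c
  constructor
  · rintro ⟨φ, hφL, hφadj, ⟨ψ, hψL, hψadj, hψC, hψ1, hψ2⟩, hq1c, hq2c⟩
    -- `S`: the side of the chord containing `P`
    set S : Set V := {v | v ∉ ({u1, u2} : Set V) ∧
      ∃ a, (a = p1 ∨ a = p2) ∧ a ∉ ({u1, u2} : Set V) ∧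
        Relation.ReflTransGen
          (fun x y => G.Adj x y ∧ x ∉ ({u1, u2} : Set V) ∧ y ∉ ({u1, u2} : Set V)) a v}
      with hS
    set χ : V → ℕ := fun v => if v ∈ S then ψ v else φ v with hχ
    have hSclosed : ∀ x y, x ∈ S → G.Adj x y → y ∉ ({u1, u2} : Set V) → y ∈ S := by
      rintro x y ⟨hx, a, ha, hna, hrtg⟩ hadj hy
      exact ⟨hy, a, ha, hna, hrtg.tail ⟨hadj, hx, hy⟩⟩
    have hagree : ∀ v ∈ ({u1, u2} : Set V), ψ v = φ v := by
      rintro v (rfl | rfl)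
      · exact hψ1
      · exact hψ2
    have hnotS : ∀ v ∈ ({u1, u2} : Set V), v ∉ S := fun v hv hvS => hvS.1 hv
    have hχp : ∀ v, (v = p1 ∨ v = p2) → χ v = ψ v := by
      intro v hv
      by_cases hvu : v ∈ ({u1, u2} : Set V)
      · simp only [hχ]
        rw [if_neg (hnotS v hvu), ← hagree v hvu]
      · have : v ∈ S := ⟨hvu, v, hv, hvu, Relation.ReflTransGen.refl⟩
        simp only [hχ, if_pos this]
    have hχq : ∀ v, (v = q1 ∨ v = q2) → χ v = φ v := by
      intro v hv
      by_cases hvu : v ∈ ({u1, u2} : Set V)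
      · simp only [hχ, if_neg (hnotS v hvu)]
      · have hvS : v ∉ S := by
          rintro ⟨hv', a, ha, hna, hrtg⟩
          exact hsep a v ha hv hna hvu hrtg
        simp only [hχ, if_neg hvS]
    refine ⟨χ, ?_, ?_, ?_, ?_, ?_⟩
    · intro v hv
      simp only [hχ]
      split_ifs with h
      · exact hψL v hv
      · exact hφL v hv
    · intro x y hadj
      simp only [hχ]
      split_ifs with hx hy hy
      · exact hψadj x y hadj
      · have hyu : y ∈ ({u1, u2} : Set V) := by
          by_contra h; exact hy (hSclosed x y hx hadj h)
        rw [← hagree y hyu]; exact hψadj x y hadj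
      · have hxu : x ∈ ({u1, u2} : Set V) := by
          by_contra h; exact hx (hSclosed y x hy (G.adj_symm x y hadj) h)
        rw [← hagree x hxu]; exact hψadj x y hadj
      · exact hφadj x y hadj
    · rw [hχp p1 (Or.inl rfl), hχp p2 (Or.inr rfl)]; exact hψC
    · rw [hχq q1 (Or.inl rfl)]; exact hq1c
    · rw [hχq q2 (Or.inr rfl)]; exact hq2c
  · rintro ⟨φ, hφL, hφadj, hφC, hq1c, hq2c⟩
    exact ⟨φ, hφL, hφadj, ⟨φ, hφL, hφadj, hφC, rfl, rfl⟩, hq1c, hq2c⟩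
end
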